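/- For every integer m, the cubic governing the points of inflexion of R(x) = (x²+2mx+m²+26)/(x²+2(m-15)x+m²-30m+333) has three rational roots (equivalently, after translating x → x - m, the inflexion cubic of (x²+26)/((x-15)²+108) has three rational roots). -/

import Mathlib

/-!
Writing `R = N / D` with monic quadratics `N = x² + a x + b`, `D = x² + c x + d`, one finds
`R'' = 2 C / D³` for an explicit cubic `C`, so when `D` has no real zero the inflexion points are
exactly the roots of `C`. For `R(x) = (x² + 26) / ((x - 15)² + 108)` translated by `m`, the cubic
factors as `3 (y + 11) (2y - 27) (5y - 141)` in `y = x + m`.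
-/

theorem hasDerivAt_quadratic (u v w x : ℝ) :
    HasDerivAt (fun y => u * y ^ 2 + v * y + w) (2 * u * x + v) x :=
  ((((hasDerivAt_pow 2 x).const_mul u).fun_add ((hasDerivAt_id' x).const_mul v)).add_const
    w).congr_deriv (by ring)

/-- The inflexion cubic of `(x² + a x + b) / (x² + c x + d)`. -/
def inflexionCubic (a b c d x : ℝ) : ℝ :=
  (a - c) * x ^ 3 + 3 * (b - d) * x ^ 2 + 3 * (b * c - a * d) * x
    - a * c * d + b * (c ^ 2 - d) + d ^ 2

section QuadraticRatio

variable {a b c d : ℝ} (hD : ∀ x, x ^ 2 + c * x + d ≠ 0)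
include hD

theorem deriv_quadratic_div_quadratic :
    deriv (fun x => (x ^ 2 + a * x + b) / (x ^ 2 + c * x + d)) =
      fun x => ((c - a) * x ^ 2 + 2 * (d - b) * x + (a * d - b * c)) / (x ^ 2 + c * x + d) ^ 2 := by
  funext x
  have hN := hasDerivAt_quadratic 1 a b x
  have hDx := hasDerivAt_quadratic 1 c d x
  simp only [one_mul, mul_one] at hN hDx
  rw [(hN.fun_div hDx (hD x)).deriv]
  congr 1
  ring

theorem iteratedDeriv_two_quadratic_div_quadratic (x : ℝ) :
    iteratedDeriv 2 (fun x => (x ^ 2 + a * x + b) / (x ^ 2 + c * x + d)) x =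
      2 * inflexionCubic a b c d x / (x ^ 2 + c * x + d) ^ 3 := by
  rw [iteratedDeriv_succ, iteratedDeriv_one, deriv_quadratic_div_quadratic hD]
  have hDx := hasDerivAt_quadratic 1 c d x
  simp only [one_mul, mul_one] at hDx
  rw [((hasDerivAt_quadratic (c - a) (2 * (d - b)) (a * d - b * c) x).fun_div (hDx.fun_pow 2)
    (pow_ne_zero 2 (hD x))).deriv,
    div_eq_div_iff (pow_ne_zero 2 (pow_ne_zero 2 (hD x))) (pow_ne_zero 3 (hD x))]
  unfold inflexionCubic
  push_cast
  ring

theorem iteratedDeriv_two_quadratic_div_quadratic_eq_zero_iff (x : ℝ) :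
    iteratedDeriv 2 (fun x => (x ^ 2 + a * x + b) / (x ^ 2 + c * x + d)) x = 0 ↔
      inflexionCubic a b c d x = 0 := by
  rw [iteratedDeriv_two_quadratic_div_quadratic hD, div_eq_zero_iff]
  simp [hD x]

end QuadraticRatio

theorem inflexionCubic_translate (t x : ℝ) :
    inflexionCubic (2 * t) (t ^ 2 + 26) (2 * (t - 15)) (t ^ 2 - 30 * t + 333) x =
      30 * (x - (-11 - t)) * (x - (27 / 2 - t)) * (x - (141 / 5 - t)) := by
  unfold inflexionCubic
  ring

theorem stmt_17 (m : ℤ) (R : ℝ → ℝ)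
    (hR : ∀ x : ℝ, R x = (x ^ 2 + 2 * m * x + (m ^ 2 + 26))
        / (x ^ 2 + 2 * (m - 15) * x + (m ^ 2 - 30 * m + 333))) :
    ∃ r₁ r₂ r₃ : ℚ, r₁ ≠ r₂ ∧ r₁ ≠ r₃ ∧ r₂ ≠ r₃ ∧
      ∀ x : ℝ, iteratedDeriv 2 R x = 0 ↔ (x = r₁ ∨ x = r₂ ∨ x = r₃) := by
  have hD (x : ℝ) : x ^ 2 + 2 * (m - 15) * x + (m ^ 2 - 30 * m + 333) ≠ 0 := by
    nlinarith [sq_nonneg (x + m - 15)]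
  refine ⟨-11 - m, 27 / 2 - m, 141 / 5 - m, by norm_num, by norm_num, by norm_num, fun x => ?_⟩
  rw [funext hR, iteratedDeriv_two_quadratic_div_quadratic_eq_zero_iff hD, inflexionCubic_translate]
  push_cast
  simp only [mul_eq_zero, sub_eq_zero, OfNat.ofNat_ne_zero, false_or, or_assoc]
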